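/- arXiv:2604.06919 — 2 statements merged into one kernel-verified Lean document; each statement's English description precedes it below -/
import Mathlib

section
/- The functional E(V | Ṽ) = sup_{φ ∈ C_b(X)} { V(φ) − Ṽ(e^φ − 1) } is nonnegative, and E(V | Ṽ) = 0 if and only if V = Ṽ. -/
open MeasureTheory

/-- The extended relative entropy functional for finite positive measures, defined via the
dual variational formula `E(V | Ṽ) = sup_{φ ∈ C_b(X)} { V(φ) − Ṽ(e^φ − 1) }`. -/
noncomputable def Efun {X : Type*} [MeasurableSpace X] [TopologicalSpace X]
    (V W : Measure X) : EReal :=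
  ⨆ φ : BoundedContinuousFunction X ℝ,
    ((∫ x, φ x ∂V - ∫ x, (Real.exp (φ x) - 1) ∂W : ℝ) : EReal)

/-!
Taking `φ = 0` gives `E(V | Ṽ) ≥ 0`, and `x ≤ eˣ - 1` gives `E(V | V) ≤ 0`.
Conversely, if `E(V | Ṽ) ≤ 0`, test the functional with `tψ` for small `t > 0`: since
`eʸ - 1 ≤ y + y²` for `|y| ≤ 1`, this yields `t V(ψ) ≤ t Ṽ(ψ) + t² ‖ψ‖² Ṽ(X)`; dividing by `t`
and letting `t → 0⁺` gives `V(ψ) ≤ Ṽ(ψ)`. Applied to `±ψ`, this shows that `V` and `Ṽ` agree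
on `C_b(X)`, which determines a finite Borel measure on a metrizable space.
-/

open BoundedContinuousFunction Filter Topology

theorem Real.exp_sub_one_le_add_sq {x : ℝ} (hx : |x| ≤ 1) : Real.exp x - 1 ≤ x + x ^ 2 := by
  linarith [(abs_le.mp (Real.abs_exp_sub_one_sub_id_le hx)).2]

section Integrals

variable {X : Type*} [MeasurableSpace X] [TopologicalSpace X] [OpensMeasurableSpace X]

theorem BoundedContinuousFunction.integrable_exp_sub_one (φ : X →ᵇ ℝ) (μ : Measure X)
    [IsFiniteMeasure μ] : Integrable (fun x => Real.exp (φ x) - 1) μ := by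
  have hexp : Integrable (fun x => Real.exp (φ x)) μ := by
    refine .of_bound (by fun_prop : Continuous fun x => Real.exp (φ x)).aestronglyMeasurable
      (Real.exp ‖φ‖) (ae_of_all _ fun x => ?_)
    rw [Real.norm_of_nonneg (Real.exp_nonneg _), Real.exp_le_exp]
    exact (le_abs_self _).trans (φ.norm_coe_le_norm x)
  exact hexp.sub (integrable_const 1)

theorem BoundedContinuousFunction.integral_exp_sub_one_le (φ : X →ᵇ ℝ) (hφ : ‖φ‖ ≤ 1)
    (μ : Measure X) [IsFiniteMeasure μ] :
    ∫ x, (Real.exp (φ x) - 1) ∂μ ≤ ∫ x, φ x ∂μ + ‖φ‖ ^ 2 * μ.real Set.univ := by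
  have hsq (x : X) : φ x ^ 2 ≤ ‖φ‖ ^ 2 :=
    sq_le_sq.mpr ((φ.norm_coe_le_norm x).trans (le_abs_self _))
  calc ∫ x, (Real.exp (φ x) - 1) ∂μ ≤ ∫ x, (φ x + ‖φ‖ ^ 2) ∂μ :=
        integral_mono (φ.integrable_exp_sub_one μ) ((φ.integrable μ).add (integrable_const _))
          fun x => (Real.exp_sub_one_le_add_sq ((φ.norm_coe_le_norm x).trans hφ)).trans
            (by linarith [hsq x])
    _ = ∫ x, φ x ∂μ + ‖φ‖ ^ 2 * μ.real Set.univ := by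
        rw [integral_add (φ.integrable μ) (integrable_const _), integral_const, smul_eq_mul,
          mul_comm]

theorem integral_le_integral_of_forall_le_integral_exp_sub_one {V W : Measure X}
    [IsFiniteMeasure V] [IsFiniteMeasure W]
    (h : ∀ φ : X →ᵇ ℝ, ∫ x, φ x ∂V ≤ ∫ x, (Real.exp (φ x) - 1) ∂W) (ψ : X →ᵇ ℝ) :
    ∫ x, ψ x ∂V ≤ ∫ x, ψ x ∂W := by
  set C := ‖ψ‖ ^ 2 * W.real Set.univ
  have hsmall : ∀ t ∈ Set.Ioo (0 : ℝ) (1 / (‖ψ‖ + 1)),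
      ∫ x, ψ x ∂V ≤ ∫ x, ψ x ∂W + t * C := by
    rintro t ⟨ht, htδ⟩
    have hnorm : ‖t • ψ‖ = t * ‖ψ‖ := by rw [norm_smul, Real.norm_of_nonneg ht.le]
    have htψ : t * ‖ψ‖ ≤ 1 := by
      rw [lt_div_iff₀ (by positivity)] at htδ
      nlinarith
    have hint (μ : Measure X) : ∫ x, (t • ψ) x ∂μ = t * ∫ x, ψ x ∂μ := by
      simp only [coe_smul, smul_eq_mul, integral_const_mul]
    have := (h (t • ψ)).trans ((t • ψ).integral_exp_sub_one_le (hnorm ▸ htψ) W)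
    rw [hint, hint, hnorm] at this
    exact le_of_mul_le_mul_left (by linarith) ht
  have hlim : Tendsto (fun t => ∫ x, ψ x ∂W + t * C) (𝓝[>] 0) (𝓝 (∫ x, ψ x ∂W)) := by
    have hid : Tendsto id (𝓝[>] (0 : ℝ)) (𝓝 0) := tendsto_id.mono_left nhdsWithin_le_nhds
    simpa using tendsto_const_nhds.add (hid.mul_const C)
  exact ge_of_tendsto hlim
    (eventually_of_mem (Ioo_mem_nhdsGT (by positivity)) hsmall)

end Integrals

section Efun

variable {X : Type*} [MeasurableSpace X] [TopologicalSpace X]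

theorem le_Efun (V W : Measure X) (φ : X →ᵇ ℝ) :
    ((∫ x, φ x ∂V - ∫ x, (Real.exp (φ x) - 1) ∂W : ℝ) : EReal) ≤ Efun V W :=
  le_iSup (fun φ : X →ᵇ ℝ => ((∫ x, φ x ∂V - ∫ x, (Real.exp (φ x) - 1) ∂W : ℝ) : EReal)) φ

theorem Efun_nonneg (V W : Measure X) : 0 ≤ Efun V W := by
  simpa using le_Efun V W 0

theorem Efun_le_zero_iff {V W : Measure X} :
    Efun V W ≤ 0 ↔ ∀ φ : X →ᵇ ℝ, ∫ x, φ x ∂V ≤ ∫ x, (Real.exp (φ x) - 1) ∂W := by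
  simp only [Efun, iSup_le_iff, EReal.coe_nonpos, sub_nonpos]

theorem Efun_self_le_zero [OpensMeasurableSpace X] (V : Measure X) [IsFiniteMeasure V] :
    Efun V V ≤ 0 :=
  Efun_le_zero_iff.mpr fun φ => integral_mono (φ.integrable V) (φ.integrable_exp_sub_one V)
    fun x => by linarith [Real.add_one_le_exp (φ x)]

theorem eq_of_Efun_le_zero [HasOuterApproxClosed X] [BorelSpace X] {V W : Measure X}
    [IsFiniteMeasure V] [IsFiniteMeasure W] (h : Efun V W ≤ 0) : V = W := by
  have hle := integral_le_integral_of_forall_le_integral_exp_sub_one (Efun_le_zero_iff.mp h)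
  refine ext_of_forall_integral_eq_of_IsFiniteMeasure fun ψ => (hle ψ).antisymm ?_
  simpa [integral_neg] using hle (-ψ)

end Efun

/-- `E(V | Ṽ)` is nonnegative, and vanishes if and only if `V = Ṽ`. -/
theorem Efun_nonneg_and_eq_zero_iff {X : Type*} [MeasurableSpace X] [TopologicalSpace X]
    [PolishSpace X] [BorelSpace X] (V W : Measure X)
    [IsFiniteMeasure V] [IsFiniteMeasure W] :
    0 ≤ Efun V W ∧ (Efun V W = 0 ↔ V = W) := by
  refine ⟨Efun_nonneg V W, fun h => eq_of_Efun_le_zero h.le, ?_⟩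
  rintro rfl
  exact (Efun_self_le_zero V).antisymm (Efun_nonneg V V)
end

section
/- Data-processing inequality for E: if φ : X → Y is a Borel measurable map between Polish spaces and V, Ṽ are finite positive measures on X, then E(V | Ṽ) ≥ E(φ_# V | φ_# Ṽ), where φ_# denotes the pushforward. -/
open MeasureTheory

/-!
A pushforward test function `ψ ∘ φ` is bounded and Borel but in general not continuous, so it
suffices that admitting bounded Borel test functions does not increase the supremum defining
`E(V | Ṽ)`. On a metrizable space, finite measures are weakly regular, hence a
bounded Borel `f` with `|f| ≤ M` is approximated in `L¹(V + Ṽ)` by bounded continuous `g`, which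
may be clamped to `[-M, M]`. On that range `exp` is `e^M`-Lipschitz, so the objective
`V(f) − Ṽ(e^f − 1)` moves by at most `(1 + e^M) ‖f − g‖_{L¹(V + Ṽ)}`.
-/

open scoped BoundedContinuousFunction

section

variable {X : Type*} [MeasurableSpace X]

noncomputable def dualObjective (V W : Measure X) (f : X → ℝ) : ℝ :=
  ∫ x, f x ∂V - ∫ x, (Real.exp (f x) - 1) ∂W

lemma Real.abs_exp_sub_exp_le {M a b : ℝ} (ha : a ≤ M) (hb : b ≤ M) :
    |Real.exp a - Real.exp b| ≤ Real.exp M * |a - b| := by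
  simpa [Real.norm_eq_abs] using (convex_Iic M).norm_image_sub_le_of_norm_deriv_le
    (fun x _ => Real.differentiableAt_exp) (fun x hx => by simpa using Real.exp_le_exp.2 hx) hb ha

lemma Measurable.integrable_of_abs_le {μ : Measure X} [IsFiniteMeasure μ] {f : X → ℝ}
    (hf : Measurable f) {M : ℝ} (hM : ∀ x, |f x| ≤ M) : Integrable f μ :=
  .of_bound hf.aestronglyMeasurable M (.of_forall hM)

lemma abs_dualObjective_sub_le (V W : Measure X) [IsFiniteMeasure V] [IsFiniteMeasure W]
    {f g : X → ℝ} (hf : Measurable f) (hg : Measurable g) {M : ℝ}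
    (hfM : ∀ x, |f x| ≤ M) (hgM : ∀ x, |g x| ≤ M) :
    |dualObjective V W f - dualObjective V W g|
      ≤ ∫ x, |f x - g x| ∂V + Real.exp M * ∫ x, |f x - g x| ∂W := by
  have hexp : ∀ {h : X → ℝ}, (∀ x, |h x| ≤ M) → ∀ x, |Real.exp (h x)| ≤ Real.exp M :=
    fun hM x => by rw [abs_of_pos (Real.exp_pos _)]; exact Real.exp_le_exp.2 (abs_le.1 (hM x)).2
  have hfV : Integrable f V := hf.integrable_of_abs_le hfM
  have hgV : Integrable g V := hg.integrable_of_abs_le hgM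
  have hdW : Integrable (fun x => |f x - g x|) W :=
    ((hf.integrable_of_abs_le hfM).sub (hg.integrable_of_abs_le hgM)).abs
  have hfW : Integrable (fun x => Real.exp (f x)) W := hf.exp.integrable_of_abs_le (hexp hfM)
  have hgW : Integrable (fun x => Real.exp (g x)) W := hg.exp.integrable_of_abs_le (hexp hgM)
  have hsplit : dualObjective V W f - dualObjective V W g
      = ∫ x, (f x - g x) ∂V - ∫ x, (Real.exp (f x) - Real.exp (g x)) ∂W := by
    simp only [dualObjective]
    rw [integral_sub hfV hgV, integral_sub hfW hgW, integral_sub hfW (integrable_const 1),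
      integral_sub hgW (integrable_const 1)]
    ring
  have hV : |∫ x, (f x - g x) ∂V| ≤ ∫ x, |f x - g x| ∂V := abs_integral_le_integral_abs
  have hW : |∫ x, (Real.exp (f x) - Real.exp (g x)) ∂W| ≤ Real.exp M * ∫ x, |f x - g x| ∂W :=
    calc |∫ x, (Real.exp (f x) - Real.exp (g x)) ∂W|
        ≤ ∫ x, |Real.exp (f x) - Real.exp (g x)| ∂W := abs_integral_le_integral_abs
      _ ≤ ∫ x, Real.exp M * |f x - g x| ∂W :=
        integral_mono (hfW.sub hgW).abs (hdW.const_mul _)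
          fun x => Real.abs_exp_sub_exp_le (abs_le.1 (hfM x)).2 (abs_le.1 (hgM x)).2
      _ = Real.exp M * ∫ x, |f x - g x| ∂W := integral_const_mul _ _
  rw [hsplit]
  exact (abs_sub _ _).trans (add_le_add hV hW)

lemma exists_boundedContinuous_abs_le_integral_abs_sub_le [TopologicalSpace X] [NormalSpace X]
    [BorelSpace X] (μ : Measure X) [IsFiniteMeasure μ] [μ.WeaklyRegular] {f : X → ℝ}
    (hf : Measurable f) {M : ℝ} (hM : ∀ x, |f x| ≤ M) {ε : ℝ} (hε : 0 < ε) :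
    ∃ g : X →ᵇ ℝ, (∀ x, |g x| ≤ M) ∧ ∫ x, |f x - g x| ∂μ ≤ ε := by
  rcases isEmpty_or_nonempty X with hX | ⟨⟨x₀⟩⟩
  · exact ⟨0, isEmptyElim, by simp [Subsingleton.elim μ 0, hε.le]⟩
  have hM₀ : -M ≤ M := neg_le_self ((abs_nonneg _).trans (hM x₀))
  have hfμ : Integrable f μ := hf.integrable_of_abs_le hM
  obtain ⟨g₀, hg₀, hg₀μ⟩ := hfμ.exists_boundedContinuous_integral_sub_le hε
  let clamp : ℝ → ℝ := Subtype.val ∘ Set.projIcc (-M) M hM₀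
  have hclamp : LipschitzWith 1 clamp := by
    simpa only [mul_one] using (LipschitzWith.subtype_val _).comp (LipschitzWith.projIcc hM₀)
  refine ⟨g₀.comp clamp hclamp, fun x => abs_le.2 (Set.projIcc (-M) M hM₀ (g₀ x)).2, ?_⟩
  calc ∫ x, |f x - clamp (g₀ x)| ∂μ ≤ ∫ x, |f x - g₀ x| ∂μ := by
        refine integral_mono (hfμ.sub ((g₀.comp clamp hclamp).integrable μ)).abs
          (hfμ.sub hg₀μ).abs fun x => ?_
        have hfx : clamp (f x) = f x :=
          congrArg Subtype.val (Set.projIcc_of_mem hM₀ (abs_le.1 (hM x)))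
        nth_rw 1 [← hfx]
        exact Set.abs_projIcc_sub_projIcc hM₀
    _ ≤ ε := by simpa [Real.norm_eq_abs] using hg₀

lemma exists_boundedContinuous_dualObjective_ge [TopologicalSpace X] [NormalSpace X]
    [BorelSpace X] (V W : Measure X) [IsFiniteMeasure V] [IsFiniteMeasure W]
    [(V + W).WeaklyRegular] {f : X → ℝ} (hf : Measurable f) {M : ℝ} (hM : ∀ x, |f x| ≤ M)
    {δ : ℝ} (hδ : 0 < δ) :
    ∃ g : X →ᵇ ℝ, dualObjective V W f - δ ≤ dualObjective V W g := by
  have hC : 0 < 1 + Real.exp M := by positivity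
  obtain ⟨g, hgM, hfg⟩ :=
    exists_boundedContinuous_abs_le_integral_abs_sub_le (V + W) hf hM (div_pos hδ hC)
  have hint : ∀ (μ : Measure X) [IsFiniteMeasure μ], Integrable (fun x => |f x - g x|) μ :=
    fun μ _ => ((hf.integrable_of_abs_le hM).sub (g.integrable μ)).abs
  rw [integral_add_measure (hint V) (hint W)] at hfg
  set a := ∫ x, |f x - g x| ∂V
  set b := ∫ x, |f x - g x| ∂W
  have ha : 0 ≤ a := integral_nonneg fun x => abs_nonneg _
  have hb : 0 ≤ b := integral_nonneg fun x => abs_nonneg _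
  have hab : a + Real.exp M * b ≤ δ :=
    calc a + Real.exp M * b ≤ (1 + Real.exp M) * (a + b) := by
          nlinarith [mul_nonneg (Real.exp_pos M).le ha]
      _ ≤ (1 + Real.exp M) * (δ / (1 + Real.exp M)) := by gcongr
      _ = δ := mul_div_cancel₀ _ hC.ne'
  refine ⟨g, ?_⟩
  have hJ := abs_dualObjective_sub_le V W hf g.continuous.measurable hM hgM
  linarith [le_abs_self (dualObjective V W f - dualObjective V W g)]

lemma dualObjective_le_Efun [TopologicalSpace X] [TopologicalSpace.PseudoMetrizableSpace X]
    [BorelSpace X] (V W : Measure X) [IsFiniteMeasure V] [IsFiniteMeasure W] {f : X → ℝ}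
    (hf : Measurable f) {M : ℝ} (hM : ∀ x, |f x| ≤ M) :
    (dualObjective V W f : EReal) ≤ Efun V W := by
  refine EReal.ge_of_forall_gt_iff_ge.1 fun z hz => ?_
  obtain ⟨g, hg⟩ :=
    exists_boundedContinuous_dualObjective_ge V W hf hM (sub_pos.2 (EReal.coe_lt_coe_iff.1 hz))
  exact (EReal.coe_le_coe_iff.2 (by linarith)).trans
    (le_iSup (fun ψ : X →ᵇ ℝ => (dualObjective V W ψ : EReal)) g)

lemma dualObjective_map {Y : Type*} [MeasurableSpace Y] {φ : X → Y} (hφ : Measurable φ)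
    (V W : Measure X) {f : Y → ℝ} (hf : Measurable f) :
    dualObjective (V.map φ) (W.map φ) f = dualObjective V W (f ∘ φ) := by
  simp only [dualObjective, integral_map hφ.aemeasurable hf.aestronglyMeasurable,
    integral_map hφ.aemeasurable (hf.exp.sub_const 1).aestronglyMeasurable, Function.comp_apply]

end

theorem Efun_dataProcessing_general {X Y : Type*}
    [MeasurableSpace X] [TopologicalSpace X] [PolishSpace X] [BorelSpace X]
    [MeasurableSpace Y] [TopologicalSpace Y] [BorelSpace Y]
    (φ : X → Y) (hφ : Measurable φ)
    (V W : Measure X) [IsFiniteMeasure V] [IsFiniteMeasure W] :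
    Efun (V.map φ) (W.map φ) ≤ Efun V W := by
  refine iSup_le fun ψ => ?_
  have hψ : Measurable ψ := ψ.continuous.measurable
  calc (dualObjective (V.map φ) (W.map φ) ψ : EReal) = dualObjective V W (ψ ∘ φ) := by
        rw [dualObjective_map hφ V W hψ]
    _ ≤ Efun V W := dualObjective_le_Efun V W (hψ.comp hφ) fun x => ψ.norm_coe_le_norm (φ x)

/-- Data-processing inequality for `E`: pushing forward along a Borel measurable map
between Polish spaces decreases the functional. -/
theorem Efun_dataProcessing {X Y : Type*}
    [MeasurableSpace X] [TopologicalSpace X] [PolishSpace X] [BorelSpace X]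
    [MeasurableSpace Y] [TopologicalSpace Y] [PolishSpace Y] [BorelSpace Y]
    (φ : X → Y) (hφ : Measurable φ)
    (V W : Measure X) [IsFiniteMeasure V] [IsFiniteMeasure W] :
    Efun (V.map φ) (W.map φ) ≤ Efun V W :=
  Efun_dataProcessing_general φ hφ V W
end
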